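/- For every n ≥ 24 with n ≡ 0 (mod 3), there exist at least ⌊(n−15)²/72⌋ pairwise non-isomorphic strong 3-central (tricentral) 2-trees on n vertices with tail set {2,3}; that is, N_3(n) ≥ ⌊(n−15)²/72⌋. In particular, there is a constant c > 0 such that N_3(n) ≥ c·n² for all sufficiently large n with n ≡ 0 (mod 3). -/

import Mathlib

open SimpleGraph

/-- `IsTwoTree G` : `G` is a 2-tree, i.e. it can be built recursively starting from the
complete graph `K₃` by repeatedly adding a new vertex adjacent exactly to the two
endpoints of an existing edge.  This is encoded via a construction ordering of the
vertices: the first three vertices form a triangle, and every later vertex has exactly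
two earlier neighbors, which are adjacent. -/
def IsTwoTree {V : Type} [Fintype V] (G : SimpleGraph V) : Prop :=
  3 ≤ Fintype.card V ∧
  ∃ e : Fin (Fintype.card V) ≃ V,
    (∀ i j : Fin (Fintype.card V), i.val < 3 → j.val < 3 → i ≠ j → G.Adj (e i) (e j)) ∧
    (∀ k : Fin (Fintype.card V), 3 ≤ k.val →
      ∃ i j : Fin (Fintype.card V), i.val < k.val ∧ j.val < k.val ∧ i ≠ j ∧
        G.Adj (e i) (e j) ∧
        ∀ m : Fin (Fintype.card V), m.val < k.val →
          (G.Adj (e k) (e m) ↔ m = i ∨ m = j))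

/-- The degree of a vertex. -/
noncomputable def gdeg {V : Type} [Fintype V] (G : SimpleGraph V) (v : V) : ℕ :=
  (G.neighborSet v).ncard

/-- `IsStrongCentral G r Δ` : `G` is a strong `r`-central 2-tree with maximum degree `Δ`
and tail set `{2,3}` :  `G` is a 2-tree, `Δ` is the maximum degree, exactly `r` vertices
have degree `Δ`, these `r` core vertices induce a complete graph, and every remaining
(tail) vertex has degree 2 or 3. -/
def IsStrongCentral {V : Type} [Fintype V] (G : SimpleGraph V) (r Δ : ℕ) : Prop :=
  IsTwoTree G ∧
  (∀ v, gdeg G v ≤ Δ) ∧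
  ({v | gdeg G v = Δ}).ncard = r ∧
  (∀ u v, gdeg G u = Δ → gdeg G v = Δ → u ≠ v → G.Adj u v) ∧
  (∀ v, gdeg G v ≠ Δ → gdeg G v = 2 ∨ gdeg G v = 3)

/-- The number `x` of tail vertices of degree 3. -/
noncomputable def tail3 {V : Type} [Fintype V] (G : SimpleGraph V) (Δ : ℕ) : ℕ :=
  ({v | gdeg G v ≠ Δ ∧ gdeg G v = 3}).ncard

/-- The number `y` of tail vertices of degree 2. -/
noncomputable def tail2 {V : Type} [Fintype V] (G : SimpleGraph V) (Δ : ℕ) : ℕ :=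
  ({v | gdeg G v ≠ Δ ∧ gdeg G v = 2}).ncard

/-- There exist `m` pairwise non-isomorphic strong tricentral 2-trees with tail set
`{2,3}` on `n` vertices (so `N₃(n) ≥ m`). -/
def ExistsPairwiseNonIsoTricentral (n m : ℕ) : Prop :=
  ∃ Gs : Fin m → SimpleGraph (Fin n),
    (∀ i, ∃ Δ, IsStrongCentral (Gs i) 3 Δ) ∧
    ∀ i j, i ≠ j → IsEmpty (Gs i ≃g Gs j)

namespace TT
open Finset

/-- start positions of fans within a block -/
def isStart (K t u j : ℕ) : Prop :=
  j = 0 ∨ K - u ≤ j ∨ ((K + 2 - 2*t - u) ≤ j ∧ (j - (K + 2 - 2*t - u)) % 2 = 0)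

instance : ∀ K t u j, Decidable (isStart K t u j) := fun K t u j => by
  unfold isStart; infer_instance

def blk (K m : ℕ) : ℕ := (m - 3) / K
def pos (K m : ℕ) : ℕ := (m - 3) % K

/-- second parent of a tail vertex -/
def par2 (K t u m : ℕ) : ℕ :=
  if isStart K t u (pos K m) then (blk K m + 1) % 3 else m - 1

def R (K t u a b : ℕ) : Prop :=
  (a < 3 ∧ b < 3) ∨ (3 ≤ a ∧ (b = blk K a ∨ b = par2 K t u a))

instance : ∀ K t u a b, Decidable (R K t u a b) := fun K t u a b => by
  unfold R; infer_instance

def myG (n K t u : ℕ) : SimpleGraph (Fin n) where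
  Adj x y := x ≠ y ∧ (R K t u x.val y.val ∨ R K t u y.val x.val)
  symm := ⟨by intro x y ⟨h1, h2⟩; exact ⟨h1.symm, h2.symm⟩⟩
  loopless := ⟨by intro x ⟨h1, _⟩; exact h1 rfl⟩

instance (n K t u : ℕ) : DecidableRel (myG n K t u).Adj := fun x y => by
  unfold myG; infer_instance

lemma gdeg_eq_degree {V : Type} [Fintype V] (G : SimpleGraph V) [DecidableRel G.Adj] (v : V) :
    gdeg G v = G.degree v := by
  unfold gdeg
  rw [← SimpleGraph.card_neighborFinset_eq_degree, ← Set.ncard_coe_finset,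
    SimpleGraph.neighborFinset_def, Set.coe_toFinset]

lemma decomp_blk {K : ℕ} (hK : 0 < K) {b j : ℕ} (hj : j < K) :
    blk K (3 + b*K + j) = b ∧ pos K (3 + b*K + j) = j := by
  unfold blk pos
  have h : 3 + b*K + j - 3 = j + b*K := by omega
  rw [h]
  constructor
  · rw [Nat.add_mul_div_right _ _ hK, Nat.div_eq_of_lt hj]; omega
  · rw [Nat.add_mul_mod_self_right, Nat.mod_eq_of_lt hj]

lemma exists_decomp {n K : ℕ} (hn : n = 3*K + 3) {m : ℕ} (h3 : 3 ≤ m) (hm : m < n) :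
    m = 3 + blk K m * K + pos K m ∧ blk K m < 3 ∧ pos K m < K := by
  have hK : 0 < K := by omega
  unfold blk pos
  have h1 := Nat.div_add_mod (m - 3) K
  have hcomm : (m - 3) / K * K = K * ((m - 3) / K) := mul_comm _ _
  have h2 : (m - 3) % K < K := Nat.mod_lt _ hK
  have h3' : (m - 3) / K < 3 := by
    rw [Nat.div_lt_iff_lt_mul hK]; omega
  omega

/-- injectivity of the block decomposition -/
lemma decomp_inj {K b b' j j' : ℕ} (hb : b < 3) (hb' : b' < 3) (hj : j < K) (hj' : j' < K)
    (h : 3 + b*K + j = 3 + b'*K + j') : b = b' ∧ j = j' := by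
  interval_cases b <;> interval_cases b' <;> omega

end TT
namespace TT
open Finset

section Count
variable {K t u : ℕ} (hK : 7 ≤ K) (ht : 1 ≤ t) (htu : 2*t + u ≤ K)
include hK ht htu

lemma card_starts :
    ((Finset.range K).filter (fun j => isStart K t u j)).card = t + u := by
  classical
  set L := K + 2 - 2*t - u with hL
  have hL2 : 2 ≤ L := by omega
  have hLK : L + 2*(t-1) = K - u := by omega
  have key : ((Finset.range K).filter (fun j => isStart K t u j))
      = insert 0 (((Finset.range (t-1)).image (fun i => L + 2*i)) ∪
        ((Finset.range u).image (fun i => K - u + i))) := by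
    ext j
    rw [Finset.mem_filter]
    simp only [Finset.mem_filter, Finset.mem_range, Finset.mem_insert, Finset.mem_union,
      Finset.mem_image, isStart]
    constructor
    · rintro ⟨hjK, h0 | hKu | ⟨hLj, hpar⟩⟩
      · exact Or.inl h0
      · exact Or.inr (Or.inr ⟨j - (K - u), by omega, by omega⟩)
      · by_cases hcase : K - u ≤ j
        · exact Or.inr (Or.inr ⟨j - (K - u), by omega, by omega⟩)
        · exact Or.inr (Or.inl ⟨(j - L)/2, by omega, by omega⟩)
    · rintro (h0 | ⟨i, hi, rfl⟩ | ⟨i, hi, rfl⟩)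
      · subst h0; exact ⟨by omega, Or.inl rfl⟩
      · exact ⟨by omega, Or.inr (Or.inr ⟨by omega, by omega⟩)⟩
      · exact ⟨by omega, Or.inr (Or.inl (by omega))⟩
  rw [key]
  rw [Finset.card_insert_of_notMem, Finset.card_union_of_disjoint]
  · rw [Finset.card_image_of_injective _ (fun a b h => by omega),
      Finset.card_image_of_injective _ (fun a b h => by omega),
      Finset.card_range, Finset.card_range]
    omega
  · rw [Finset.disjoint_left]
    intro x hx hx'
    simp only [Finset.mem_image, Finset.mem_range] at hx hx'
    obtain ⟨i, hi, rfl⟩ := hx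
    obtain ⟨i', hi', h⟩ := hx'
    omega
  · simp only [Finset.mem_union, Finset.mem_image, Finset.mem_range]
    rintro (⟨i, hi, h⟩ | ⟨i, hi, h⟩) <;> omega

lemma card_good :
    ((Finset.range K).filter
      (fun j => isStart K t u j ∧ j + 1 < K ∧ ¬ isStart K t u (j+1))).card = t := by
  classical
  set L := K + 2 - 2*t - u with hL
  have hL2 : 2 ≤ L := by omega
  have key : ((Finset.range K).filter
      (fun j => isStart K t u j ∧ j + 1 < K ∧ ¬ isStart K t u (j+1)))
      = insert 0 ((Finset.range (t-1)).image (fun i => L + 2*i)) := by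
    ext j
    simp only [Finset.mem_filter, Finset.mem_range, Finset.mem_insert,
      Finset.mem_image, isStart, not_or, not_and_or]
    constructor
    · rintro ⟨hjK, hS, hj1, hN⟩
      rcases hS with h0 | hKu | ⟨hLj, hpar⟩
      · exact Or.inl h0
      · omega
      · by_cases hcase : K - u ≤ j
        · omega
        · refine Or.inr ⟨(j - L)/2, by omega, by omega⟩
    · rintro (h0 | ⟨i, hi, rfl⟩)
      · subst h0
        refine ⟨by omega, Or.inl rfl, by omega, ?_, ?_, ?_⟩ <;> omega
      · refine ⟨by omega, Or.inr (Or.inr ⟨by omega, by omega⟩), by omega, ?_, ?_, ?_⟩ <;> omega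
  rw [key, Finset.card_insert_of_notMem, Finset.card_image_of_injective _
      (fun a b h => by omega), Finset.card_range]
  · omega
  · simp only [Finset.mem_image, Finset.mem_range]
    rintro ⟨i, hi, h⟩; omega

end Count
end TT
namespace TT
open Finset

def Ncore (K t u v : ℕ) : Finset ℕ :=
  (({0,1,2} : Finset ℕ).erase v) ∪ ((Finset.range K).image fun j => 3 + v*K + j) ∪
    (((Finset.range K).filter (fun j => isStart K t u j)).image
      fun j => 3 + ((v+1)%3 + 1)%3*K + j)

def Ntail (K t u m : ℕ) : Finset ℕ :=
  {blk K m, par2 K t u m} ∪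
    (if pos K m + 1 < K ∧ ¬ isStart K t u (pos K m + 1) then {m+1} else (∅ : Finset ℕ))

section Adj
variable {n K t u : ℕ} (hn : n = 3*K + 3) (hK : 7 ≤ K) (ht : 1 ≤ t) (htu : 2*t + u ≤ K)
include hn hK

lemma adj_core_iff (v x : Fin n) (hv : v.val < 3) :
    (myG n K t u).Adj v x ↔ x.val ∈ Ncore K t u v.val := by
  have hK0 : 0 < K := by omega
  constructor
  · rintro ⟨hne, hR | hR⟩
    · rcases hR with ⟨-, hx3⟩ | ⟨h3v, -⟩
      · apply Finset.mem_union_left; apply Finset.mem_union_left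
        rw [Finset.mem_erase]
        exact ⟨fun h => hne (Fin.val_injective h.symm), by simp; omega⟩
      · omega
    · rcases hR with ⟨hx3, -⟩ | ⟨h3x, hpar⟩
      · apply Finset.mem_union_left; apply Finset.mem_union_left
        rw [Finset.mem_erase]
        exact ⟨fun h => hne (Fin.val_injective h.symm), by simp; omega⟩
      · obtain ⟨hdec, hb, hp⟩ := exists_decomp hn h3x x.isLt
        rcases hpar with hblk | hpar2
        · apply Finset.mem_union_left; apply Finset.mem_union_right
          rw [Finset.mem_image]
          refine ⟨pos K x.val, by simp [hp], by rw [hblk]; omega⟩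
        · unfold par2 at hpar2
          split_ifs at hpar2 with hS
          · apply Finset.mem_union_right
            rw [Finset.mem_image]
            refine ⟨pos K x.val, by simp [hp, hS], ?_⟩
            have hback : ((v.val+1)%3 + 1)%3 = blk K x.val := by omega
            rw [hback]; omega
          · have : pos K x.val ≠ 0 := fun h => hS (Or.inl h)
            omega
  · intro hx
    rcases Finset.mem_union.mp hx with hx' | hx'
    · rcases Finset.mem_union.mp hx' with hx'' | hx''
      · rw [Finset.mem_erase] at hx''
        obtain ⟨hne, hmem⟩ := hx''
        have hx3 : x.val < 3 := by simp at hmem; omega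
        exact ⟨fun h => hne (by rw [h]), Or.inl (Or.inl ⟨hv, hx3⟩)⟩
      · rw [Finset.mem_image] at hx''
        obtain ⟨j, hj, hxval⟩ := hx''
        rw [Finset.mem_range] at hj
        have hd := decomp_blk hK0 (b := v.val) hj
        rw [hxval] at hd
        refine ⟨fun h => ?_, Or.inr (Or.inr ⟨by omega, Or.inl (by omega)⟩)⟩
        have : v.val = x.val := congrArg Fin.val h
        omega
    · rw [Finset.mem_image] at hx'
      obtain ⟨j, hj, hxval⟩ := hx'
      rw [Finset.mem_filter, Finset.mem_range] at hj
      have hd := decomp_blk hK0 (b := ((v.val+1)%3 + 1)%3) hj.1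
      rw [hxval] at hd
      refine ⟨fun h => ?_, Or.inr (Or.inr ⟨by omega, Or.inr ?_⟩)⟩
      · have : v.val = x.val := congrArg Fin.val h
        omega
      · unfold par2
        rw [hd.2, if_pos hj.2, hd.1]
        omega

lemma adj_tail_iff (m x : Fin n) (h3 : 3 ≤ m.val) :
    (myG n K t u).Adj m x ↔ x.val ∈ Ntail K t u m.val := by
  have hK0 : 0 < K := by omega
  obtain ⟨hdec, hb, hp⟩ := exists_decomp hn h3 m.isLt
  have hpar2lt : par2 K t u m.val < m.val := by
    unfold par2; split_ifs with hS
    · omega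
    · have : pos K m.val ≠ 0 := fun h => hS (Or.inl h)
      omega
  constructor
  · rintro ⟨hne, hR | hR⟩
    · rcases hR with ⟨h3m, -⟩ | ⟨-, hpar⟩
      · omega
      · apply Finset.mem_union_left
        simp only [Finset.mem_insert, Finset.mem_singleton]
        tauto
    · rcases hR with ⟨-, h3m⟩ | ⟨h3x, hpar⟩
      · omega
      · rcases hpar with hblk | hpar2
        · have : blk K x.val < 3 := (exists_decomp hn h3x x.isLt).2.1
          omega
        · -- x is a child of m : x = m+1
          obtain ⟨hdx, hbx, hpx⟩ := exists_decomp hn h3x x.isLt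
          unfold par2 at hpar2
          split_ifs at hpar2 with hS
          · omega
          · have hxm1 : x.val = m.val + 1 := by
              have : pos K x.val ≠ 0 := fun h => hS (Or.inl h)
              omega
            have hsame : blk K x.val = blk K m.val ∧ pos K x.val = pos K m.val + 1 := by
              by_cases hcase : pos K m.val + 1 < K
              · have hd := decomp_blk hK0 (b := blk K m.val) hcase
                have heq : 3 + blk K m.val * K + (pos K m.val + 1) = x.val := by omega
                rw [heq] at hd
                exact hd
              · -- pos m = K-1 : impossible
                exfalso
                by_cases hb2 : blk K m.val < 2
                · have hd := decomp_blk hK0 (b := blk K m.val + 1) (j := 0) hK0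
                  have hexp : (blk K m.val + 1)*K = blk K m.val * K + K := by ring
                  have heq : 3 + (blk K m.val + 1)*K + 0 = x.val := by omega
                  rw [heq] at hd
                  exact hS (Or.inl hd.2)
                · have h2 : blk K m.val = 2 := by omega
                  rw [h2] at hdec
                  have : ¬ (x.val < n) := by omega
                  exact this x.isLt
            apply Finset.mem_union_right
            rw [if_pos ⟨by omega, fun hh => hS (by rw [hsame.2]; exact hh)⟩]
            simp [hxm1]
  · intro hx
    rcases Finset.mem_union.mp hx with hx' | hx'
    · simp only [Finset.mem_insert, Finset.mem_singleton] at hx'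
      rcases hx' with h | h
      · exact ⟨fun hh => by have := congrArg Fin.val hh; omega,
          Or.inl (Or.inr ⟨h3, Or.inl h⟩)⟩
      · exact ⟨fun hh => by have := congrArg Fin.val hh; omega,
          Or.inl (Or.inr ⟨h3, Or.inr h⟩)⟩
    · split_ifs at hx' with hcond
      · rw [Finset.mem_singleton] at hx'
        have hd := decomp_blk hK0 (b := blk K m.val) hcond.1
        have heq : 3 + blk K m.val * K + (pos K m.val + 1) = x.val := by omega
        rw [heq] at hd
        refine ⟨fun hh => by have := congrArg Fin.val hh; omega,
          Or.inr (Or.inr ⟨by omega, Or.inr ?_⟩)⟩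
        unfold par2
        rw [hd.2, if_neg hcond.2]
        omega
      · simp at hx'

end Adj
end TT
namespace TT
open Finset

lemma degree_eq_card {n : ℕ} (G : SimpleGraph (Fin n)) [DecidableRel G.Adj] (v : Fin n)
    (F : Finset ℕ) (hF : ∀ a ∈ F, a < n) (h : ∀ x : Fin n, G.Adj v x ↔ x.val ∈ F) :
    G.degree v = F.card := by
  rw [← SimpleGraph.card_neighborFinset_eq_degree]
  apply Finset.card_nbij (i := Fin.val)
  · intro a ha
    rw [Finset.mem_coe, SimpleGraph.mem_neighborFinset] at ha
    exact (h a).mp ha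
  · intro a _ b _ hab
    exact Fin.val_injective hab
  · intro a ha
    rw [Finset.mem_coe] at ha
    exact ⟨⟨a, hF a ha⟩, by rw [Finset.mem_coe, SimpleGraph.mem_neighborFinset, h]; exact ha, rfl⟩

section Deg
variable {n K t u : ℕ} (hn : n = 3*K + 3) (hK : 7 ≤ K) (ht : 1 ≤ t) (htu : 2*t + u ≤ K)
include hn hK ht htu
set_option linter.unusedSectionVars false

lemma mem_Ncore_lt {v a : ℕ} (hv : v < 3) (ha : a ∈ Ncore K t u v) : a < n := by
  rcases Finset.mem_union.mp ha with h | h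
  · rcases Finset.mem_union.mp h with h' | h'
    · rw [Finset.mem_erase] at h'; have := h'.2; simp at this; omega
    · rw [Finset.mem_image] at h'
      obtain ⟨j, hj, rfl⟩ := h'
      rw [Finset.mem_range] at hj
      have : v * K ≤ 2 * K := by
        apply Nat.mul_le_mul_right; omega
      omega
  · rw [Finset.mem_image] at h
    obtain ⟨j, hj, rfl⟩ := h
    rw [Finset.mem_filter, Finset.mem_range] at hj
    have : ((v+1)%3 + 1)%3 * K ≤ 2 * K := by
      apply Nat.mul_le_mul_right; omega
    omega

lemma card_Ncore {v : ℕ} (hv : v < 3) : (Ncore K t u v).card = K + 2 + (t + u) := by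
  have hK0 : 0 < K := by omega
  have hw : ((v+1)%3 + 1)%3 ≠ v := by omega
  have hw3 : ((v+1)%3 + 1)%3 < 3 := by omega
  unfold Ncore
  have d1 : Disjoint (({0,1,2} : Finset ℕ).erase v)
      ((Finset.range K).image fun j => 3 + v*K + j) := by
    rw [Finset.disjoint_left]
    intro a ha ha'
    rw [Finset.mem_erase] at ha
    have h3 : a < 3 := by have := ha.2; simp at this; omega
    rw [Finset.mem_image] at ha'
    obtain ⟨j, hj, rfl⟩ := ha'
    omega
  have d2 : Disjoint ((({0,1,2} : Finset ℕ).erase v) ∪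
      ((Finset.range K).image fun j => 3 + v*K + j))
      (((Finset.range K).filter (fun j => isStart K t u j)).image
        fun j => 3 + ((v+1)%3 + 1)%3*K + j) := by
    rw [Finset.disjoint_left]
    intro a ha ha'
    rw [Finset.mem_image] at ha'
    obtain ⟨j, hj, rfl⟩ := ha'
    rw [Finset.mem_filter, Finset.mem_range] at hj
    rcases Finset.mem_union.mp ha with h | h
    · rw [Finset.mem_erase] at h
      have h3 := h.2; simp at h3
      omega
    · rw [Finset.mem_image] at h
      obtain ⟨j', hj', heq⟩ := h
      rw [Finset.mem_range] at hj'
      have := (decomp_inj hv hw3 hj' hj.1 heq).1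
      omega
  rw [Finset.card_union_of_disjoint d2, Finset.card_union_of_disjoint d1,
    Finset.card_erase_of_mem (by simp; omega),
    Finset.card_image_of_injective _ (fun a b h => by omega),
    Finset.card_image_of_injective _ (fun a b h => by omega),
    Finset.card_range, card_starts hK ht htu]
  have h3c : ({0,1,2} : Finset ℕ).card = 3 := rfl
  omega

lemma degree_core (v : Fin n) (hv : v.val < 3) :
    (myG n K t u).degree v = K + 2 + (t + u) := by
  rw [degree_eq_card _ _ (Ncore K t u v.val) (fun a ha => mem_Ncore_lt hn hK ht htu hv ha)
    (fun x => adj_core_iff hn hK v x hv)]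
  exact card_Ncore hn hK ht htu hv

lemma mem_Ntail_lt {a : ℕ} {m : Fin n} (h3 : 3 ≤ m.val) (ha : a ∈ Ntail K t u m.val) :
    a < n := by
  have hK0 : 0 < K := by omega
  obtain ⟨hdec, hb, hp⟩ := exists_decomp hn h3 m.isLt
  rcases Finset.mem_union.mp ha with h | h
  · simp only [Finset.mem_insert, Finset.mem_singleton] at h
    have hpar2lt : par2 K t u m.val < m.val := by
      unfold par2; split_ifs with hS
      · omega
      · have : pos K m.val ≠ 0 := fun h => hS (Or.inl h)
        omega
    rcases h with rfl | rfl
    · omega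
    · omega
  · split_ifs at h with hcond
    · rw [Finset.mem_singleton] at h
      subst h
      -- m+1 < n since pos m + 1 < K
      have : blk K m.val * K ≤ 2 * K := by apply Nat.mul_le_mul_right; omega
      omega
    · simp at h

lemma degree_tail (m : Fin n) (h3 : 3 ≤ m.val) :
    (myG n K t u).degree m =
      if pos K m.val + 1 < K ∧ ¬ isStart K t u (pos K m.val + 1) then 3 else 2 := by
  have hK0 : 0 < K := by omega
  obtain ⟨hdec, hb, hp⟩ := exists_decomp hn h3 m.isLt
  have hpar2lt : par2 K t u m.val < m.val := by
    unfold par2; split_ifs with hS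
    · omega
    · have : pos K m.val ≠ 0 := fun h => hS (Or.inl h)
      omega
  have hbp : blk K m.val ≠ par2 K t u m.val := by
    unfold par2; split_ifs with hS
    · omega
    · have : pos K m.val ≠ 0 := fun h => hS (Or.inl h)
      omega
  rw [degree_eq_card _ _ (Ntail K t u m.val) (fun a ha => mem_Ntail_lt hn hK ht htu h3 ha)
    (fun x => adj_tail_iff hn hK m x h3)]
  unfold Ntail
  split_ifs with hcond
  · rw [Finset.card_union_of_disjoint, Finset.card_singleton]
    · rw [Finset.card_insert_of_notMem (by simp [hbp]), Finset.card_singleton]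
    · rw [Finset.disjoint_left]
      intro a ha ha'
      simp only [Finset.mem_insert, Finset.mem_singleton] at ha ha'
      rcases ha with rfl | rfl <;> omega
  · rw [Finset.union_empty, Finset.card_insert_of_notMem (by simp [hbp]),
      Finset.card_singleton]

end Deg
end TT
namespace TT
open Finset

section Struct
variable {n K t u : ℕ} (hn : n = 3*K + 3) (hK : 7 ≤ K) (ht : 1 ≤ t) (htu : 2*t + u ≤ K)
include hn hK ht htu
set_option linter.unusedSectionVars false

lemma par2_lt {m : ℕ} (h3 : 3 ≤ m) (hm : m < n) : par2 K t u m < m := by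
  obtain ⟨hdec, hb, hp⟩ := exists_decomp hn h3 hm
  unfold par2; split_ifs with hS
  · omega
  · have : pos K m ≠ 0 := fun h => hS (Or.inl h)
    omega

lemma blk_lt {m : ℕ} (h3 : 3 ≤ m) (hm : m < n) : blk K m < 3 :=
  (exists_decomp hn h3 hm).2.1

lemma blk_ne_par2 {m : ℕ} (h3 : 3 ≤ m) (hm : m < n) : blk K m ≠ par2 K t u m := by
  obtain ⟨hdec, hb, hp⟩ := exists_decomp hn h3 hm
  unfold par2; split_ifs with hS
  · omega
  · have : pos K m ≠ 0 := fun h => hS (Or.inl h)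
    omega

lemma blk_pred {m : ℕ} (h3 : 3 ≤ m) (hm : m < n) (hS : ¬ isStart K t u (pos K m)) :
    blk K (m-1) = blk K m ∧ pos K (m-1) = pos K m - 1 := by
  have hK0 : 0 < K := by omega
  obtain ⟨hdec, hb, hp⟩ := exists_decomp hn h3 hm
  have hp0 : pos K m ≠ 0 := fun h => hS (Or.inl h)
  have hd := decomp_blk hK0 (b := blk K m) (j := pos K m - 1) (by omega)
  have heq : 3 + blk K m * K + (pos K m - 1) = m - 1 := by omega
  rw [heq] at hd
  exact hd

lemma parents_adj {m : ℕ} (h3 : 3 ≤ m) (hm : m < n) (x y : Fin n)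
    (hx : x.val = blk K m) (hy : y.val = par2 K t u m) : (myG n K t u).Adj x y := by
  have hb3 := blk_lt hn hK ht htu h3 hm
  have hne := blk_ne_par2 hn hK ht htu h3 hm
  have hplt := par2_lt hn hK ht htu h3 hm
  refine ⟨fun h => hne (by rw [← hx, ← hy, h]), ?_⟩
  by_cases hS : isStart K t u (pos K m)
  · have hy3 : y.val < 3 := by rw [hy]; unfold par2; rw [if_pos hS]; omega
    exact Or.inl (Or.inl ⟨by omega, hy3⟩)
  · have hp0 : pos K m ≠ 0 := fun h => hS (Or.inl h)
    obtain ⟨hdec, hb, hp⟩ := exists_decomp hn h3 hm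
    have hbp := blk_pred hn hK ht htu h3 hm hS
    have hy1 : y.val = m - 1 := by rw [hy]; unfold par2; rw [if_neg hS]
    refine Or.inr (Or.inr ⟨by omega, Or.inl ?_⟩)
    rw [hx, hy1]
    omega

lemma twoTree : IsTwoTree (myG n K t u) := by
  have hcard : Fintype.card (Fin n) = n := Fintype.card_fin n
  refine ⟨by omega, finCongr hcard, ?_, ?_⟩
  · intro i j hi hj hij
    exact ⟨fun h => hij ((finCongr hcard).injective h), Or.inl (Or.inl ⟨hi, hj⟩)⟩
  · intro k hk
    have hkn : k.val < n := lt_of_lt_of_eq k.isLt hcard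
    have hb3 := blk_lt hn hK ht htu hk hkn
    have hplt := par2_lt hn hK ht htu hk hkn
    refine ⟨(finCongr hcard).symm ⟨blk K k.val, by omega⟩,
           (finCongr hcard).symm ⟨par2 K t u k.val, by omega⟩, ?_, ?_, ?_, ?_, ?_⟩
    · show blk K k.val < k.val; omega
    · show par2 K t u k.val < k.val; omega
    · intro h
      have h' : blk K k.val = par2 K t u k.val :=
        congrArg Fin.val ((finCongr hcard).symm.injective h)
      exact blk_ne_par2 hn hK ht htu hk hkn h'
    · exact parents_adj hn hK ht htu hk hkn _ _ rfl rfl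
    · intro m hm
      constructor
      · rintro ⟨hne, hR | hR⟩
        · rcases hR with ⟨h1, -⟩ | ⟨-, hpar⟩
          · have h1' : k.val < 3 := h1
            omega
          · rcases hpar with h | h
            · exact Or.inl (Fin.val_injective h)
            · exact Or.inr (Fin.val_injective h)
        · rcases hR with ⟨-, h2⟩ | ⟨h3m, hpar⟩
          · have h2' : k.val < 3 := h2
            omega
          · have h3m' : 3 ≤ m.val := h3m
            have hmn : m.val < n := lt_of_lt_of_eq m.isLt hcard
            rcases hpar with h | h
            · have hb := blk_lt hn hK ht htu h3m' hmn
              have h' : k.val = blk K m.val := h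
              omega
            · have hp := par2_lt hn hK ht htu h3m' hmn
              have h' : k.val = par2 K t u m.val := h
              omega
      · rintro (rfl | rfl)
        · refine ⟨fun h => ?_, Or.inl (Or.inr ⟨hk, Or.inl rfl⟩)⟩
          have h' : k.val = blk K k.val := congrArg Fin.val h
          omega
        · refine ⟨fun h => ?_, Or.inl (Or.inr ⟨hk, Or.inr rfl⟩)⟩
          have h' : k.val = par2 K t u k.val := congrArg Fin.val h
          omega

end Struct
end TT
namespace TT
open Finset

/-- second invariant : number of degree-3 vertices with two neighbors of degree ≥ 4 -/
noncomputable def inv2 {V : Type} [Fintype V] (G : SimpleGraph V) : ℕ :=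
  ({v | gdeg G v = 3 ∧ ∃ x y, x ≠ y ∧ G.Adj v x ∧ G.Adj v y ∧
      4 ≤ gdeg G x ∧ 4 ≤ gdeg G y}).ncard

lemma card_filter_val {n : ℕ} (P : ℕ → Prop) [DecidablePred P] :
    (Finset.univ.filter (fun x : Fin n => P x.val)).card
      = ((Finset.range n).filter P).card := by
  apply Finset.card_nbij (i := Fin.val)
  · intro a ha
    rw [Finset.mem_coe, Finset.mem_filter] at ha ⊢
    exact ⟨Finset.mem_range.mpr a.isLt, ha.2⟩
  · intro a _ b _ hab
    exact Fin.val_injective hab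
  · intro a ha
    rw [Finset.mem_coe, Finset.mem_filter, Finset.mem_range] at ha
    exact ⟨⟨a, ha.1⟩, by rw [Finset.mem_coe, Finset.mem_filter]; exact ⟨Finset.mem_univ _, ha.2⟩,
      rfl⟩

section Main
variable {n K t u : ℕ} (hn : n = 3*K + 3) (hK : 7 ≤ K) (ht : 1 ≤ t) (htu : 2*t + u ≤ K)
include hn hK ht htu
set_option linter.unusedSectionVars false

lemma gdeg_core' (v : Fin n) (hv : v.val < 3) :
    gdeg (myG n K t u) v = K + 2 + (t + u) := by
  rw [gdeg_eq_degree]; exact degree_core hn hK ht htu v hv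

lemma gdeg_tail' (m : Fin n) (h3 : 3 ≤ m.val) :
    gdeg (myG n K t u) m =
      if pos K m.val + 1 < K ∧ ¬ isStart K t u (pos K m.val + 1) then 3 else 2 := by
  rw [gdeg_eq_degree]; exact degree_tail hn hK ht htu m h3

lemma gdeg_tail_le (m : Fin n) (h3 : 3 ≤ m.val) : gdeg (myG n K t u) m ≤ 3 := by
  rw [gdeg_tail' hn hK ht htu m h3]; split_ifs <;> omega

lemma gdeg_eq_delta_iff (v : Fin n) :
    gdeg (myG n K t u) v = K + 2 + (t + u) ↔ v.val < 3 := by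
  constructor
  · intro h
    by_contra hv
    have := gdeg_tail_le hn hK ht htu v (by omega)
    omega
  · exact gdeg_core' hn hK ht htu v

lemma core_set_eq : {v : Fin n | gdeg (myG n K t u) v = K + 2 + (t + u)}
    = ↑(Finset.univ.filter (fun v : Fin n => v.val < 3)) := by
  ext v
  simp only [Set.mem_setOf_eq, Finset.coe_filter, Finset.mem_univ, true_and,
    Set.mem_setOf_eq]
  exact gdeg_eq_delta_iff hn hK ht htu v

lemma ncard_core_set :
    ({v : Fin n | gdeg (myG n K t u) v = K + 2 + (t + u)}).ncard = 3 := by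
  rw [core_set_eq hn hK ht htu, Set.ncard_coe_finset, card_filter_val (fun a => a < 3)]
  have : (Finset.range n).filter (fun a => a < 3) = {0, 1, 2} := by
    ext a
    simp only [Finset.mem_filter, Finset.mem_range, Finset.mem_insert, Finset.mem_singleton]
    omega
  rw [this]
  rfl

lemma isStrong : IsStrongCentral (myG n K t u) 3 (K + 2 + (t + u)) := by
  refine ⟨twoTree hn hK ht htu, ?_, ncard_core_set hn hK ht htu, ?_, ?_⟩
  · intro v
    by_cases hv : v.val < 3
    · rw [gdeg_core' hn hK ht htu v hv]
    · have := gdeg_tail_le hn hK ht htu v (by omega)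
      omega
  · intro a b ha hb hab
    have ha3 := (gdeg_eq_delta_iff hn hK ht htu a).mp ha
    have hb3 := (gdeg_eq_delta_iff hn hK ht htu b).mp hb
    exact ⟨hab, Or.inl (Or.inl ⟨ha3, hb3⟩)⟩
  · intro v hv
    have h3 : 3 ≤ v.val := by
      by_contra h
      exact hv (gdeg_core' hn hK ht htu v (by omega))
    rw [gdeg_tail' hn hK ht htu v h3]
    split_ifs
    · right; rfl
    · left; rfl

lemma inv2_set_eq :
    {v : Fin n | gdeg (myG n K t u) v = 3 ∧ ∃ x y, x ≠ y ∧ (myG n K t u).Adj v x ∧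
      (myG n K t u).Adj v y ∧ 4 ≤ gdeg (myG n K t u) x ∧ 4 ≤ gdeg (myG n K t u) y}
    = ↑(Finset.univ.filter (fun v : Fin n => 3 ≤ v.val ∧ isStart K t u (pos K v.val) ∧
        pos K v.val + 1 < K ∧ ¬ isStart K t u (pos K v.val + 1))) := by
  have hK0 : 0 < K := by omega
  ext v
  simp only [Set.mem_setOf_eq, Finset.coe_filter, Finset.mem_univ, true_and,
    Set.mem_setOf_eq]
  constructor
  · rintro ⟨hdeg3, x, y, hxy, hax, hay, hdx, hdy⟩
    have h3 : 3 ≤ v.val := by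
      by_contra h
      rw [gdeg_core' hn hK ht htu v (by omega)] at hdeg3
      omega
    have hcond : pos K v.val + 1 < K ∧ ¬ isStart K t u (pos K v.val + 1) := by
      rw [gdeg_tail' hn hK ht htu v h3] at hdeg3
      by_contra h
      rw [if_neg h] at hdeg3
      omega
    refine ⟨h3, ?_, hcond.1, hcond.2⟩
    by_contra hS
    obtain ⟨hdec, hb, hp⟩ := exists_decomp hn h3 v.isLt
    have hp0 : pos K v.val ≠ 0 := fun h => hS (Or.inl h)
    have hpar2 : par2 K t u v.val = v.val - 1 := by unfold par2; rw [if_neg hS]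
    -- any neighbor of big degree must be the core vertex blk
    have key : ∀ z : Fin n, (myG n K t u).Adj v z → 4 ≤ gdeg (myG n K t u) z →
        z.val = blk K v.val := by
      intro z haz hdz
      have hz := (adj_tail_iff hn hK v z h3).mp haz
      rcases Finset.mem_union.mp hz with h | h
      · simp only [Finset.mem_insert, Finset.mem_singleton] at h
        rcases h with h | h
        · exact h
        · exfalso
          rw [hpar2] at h
          have hz3 : 3 ≤ z.val := by omega
          have := gdeg_tail_le hn hK ht htu z hz3
          omega
      · rw [if_pos hcond, Finset.mem_singleton] at h
        exfalso
        have hz3 : 3 ≤ z.val := by omega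
        have := gdeg_tail_le hn hK ht htu z hz3
        omega
    have hx := key x hax hdx
    have hy := key y hay hdy
    exact hxy (Fin.val_injective (hx.trans hy.symm))
  · rintro ⟨h3, hS, hc1, hc2⟩
    obtain ⟨hdec, hb, hp⟩ := exists_decomp hn h3 v.isLt
    have hpar2 : par2 K t u v.val = (blk K v.val + 1) % 3 := by unfold par2; rw [if_pos hS]
    refine ⟨by rw [gdeg_tail' hn hK ht htu v h3, if_pos ⟨hc1, hc2⟩], ⟨blk K v.val, by omega⟩,
      ⟨par2 K t u v.val, by omega⟩, ?_, ?_, ?_, ?_, ?_⟩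
    · intro h
      exact blk_ne_par2 hn hK ht htu h3 v.isLt (congrArg Fin.val h)
    · exact (adj_tail_iff hn hK v _ h3).mpr
        (Finset.mem_union_left _ (Finset.mem_insert_self _ _))
    · exact (adj_tail_iff hn hK v _ h3).mpr
        (Finset.mem_union_left _ (Finset.mem_insert_of_mem (Finset.mem_singleton_self _)))
    · rw [gdeg_core' hn hK ht htu _ (by simp; omega)]
      omega
    · rw [gdeg_core' hn hK ht htu _ (by simp [hpar2]; omega)]
      omega

lemma inv2_myG : inv2 (myG n K t u) = 3 * t := by
  have hK0 : 0 < K := by omega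
  unfold inv2
  rw [inv2_set_eq hn hK ht htu, Set.ncard_coe_finset,
    card_filter_val (fun a => 3 ≤ a ∧ isStart K t u (pos K a) ∧
      pos K a + 1 < K ∧ ¬ isStart K t u (pos K a + 1))]
  have key : (Finset.range n).filter (fun a => 3 ≤ a ∧ isStart K t u (pos K a) ∧
      pos K a + 1 < K ∧ ¬ isStart K t u (pos K a + 1))
      = (Finset.range 3).biUnion (fun b =>
          ((Finset.range K).filter (fun j => isStart K t u j ∧ j + 1 < K ∧
            ¬ isStart K t u (j+1))).image (fun j => 3 + b*K + j)) := by
    ext m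
    simp only [Finset.mem_filter, Finset.mem_range, Finset.mem_biUnion, Finset.mem_image]
    constructor
    · rintro ⟨hmn, h3, hgood⟩
      obtain ⟨hdec, hb, hp⟩ := exists_decomp hn h3 hmn
      exact ⟨blk K m, hb, pos K m, ⟨hp, hgood⟩, by omega⟩
    · rintro ⟨b, hb, j, hj, rfl⟩
      have hd := decomp_blk hK0 (b := b) hj.1
      have hbK : b * K ≤ 2 * K := by apply Nat.mul_le_mul_right; omega
      rw [hd.2]
      exact ⟨by omega, by omega, hj.2.1, hj.2.2.1, hj.2.2.2⟩
  have hdisj : ∀ b ∈ Finset.range 3, ∀ b' ∈ Finset.range 3, b ≠ b' →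
      Disjoint (((Finset.range K).filter (fun j => isStart K t u j ∧ j + 1 < K ∧
          ¬ isStart K t u (j+1))).image (fun j => 3 + b*K + j))
        (((Finset.range K).filter (fun j => isStart K t u j ∧ j + 1 < K ∧
          ¬ isStart K t u (j+1))).image (fun j => 3 + b'*K + j)) := by
    intro b hb b' hb' hbb'
    rw [Finset.mem_range] at hb hb'
    rw [Finset.disjoint_left]
    intro a ha ha'
    rw [Finset.mem_image] at ha ha'
    obtain ⟨j, hj, rfl⟩ := ha
    obtain ⟨j', hj', heq⟩ := ha'
    rw [Finset.mem_filter, Finset.mem_range] at hj hj'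
    exact hbb' (decomp_inj hb hb' hj.1 hj'.1 heq.symm).1
  rw [key, Finset.card_biUnion hdisj]
  have hc : ∀ b ∈ Finset.range 3,
      (((Finset.range K).filter (fun j => isStart K t u j ∧ j + 1 < K ∧
        ¬ isStart K t u (j+1))).image (fun j => 3 + b*K + j)).card = t := by
    intro b _
    rw [Finset.card_image_of_injective _ (fun a b h => by omega), card_good hK ht htu]
  rw [Finset.sum_congr rfl hc, Finset.sum_const, Finset.card_range, smul_eq_mul]

end Main
end TT
namespace TT
open Finset

section IsoInv
variable {V W : Type} [Fintype V] [Fintype W] {G : SimpleGraph V} {H : SimpleGraph W}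

lemma gdeg_map (φ : G ≃g H) (v : V) : gdeg H (φ v) = gdeg G v := by
  unfold gdeg
  rw [← Nat.card_coe_set_eq, ← Nat.card_coe_set_eq]
  exact Nat.card_congr (φ.mapNeighborSet v).symm

lemma deg_count_iso (φ : G ≃g H) (d : ℕ) :
    {v | gdeg H v = d}.ncard = {v | gdeg G v = d}.ncard := by
  have himg : {v | gdeg H v = d} = φ '' {v | gdeg G v = d} := by
    ext w
    simp only [Set.mem_setOf_eq, Set.mem_image]
    constructor
    · intro hw
      refine ⟨φ.symm w, ?_, φ.apply_symm_apply w⟩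
      rw [← gdeg_map φ (φ.symm w), φ.apply_symm_apply]
      exact hw
    · rintro ⟨v, hv, rfl⟩
      rw [gdeg_map]
      exact hv
  rw [himg, Set.ncard_image_of_injective _ φ.injective]

lemma inv2_iso (φ : G ≃g H) : inv2 H = inv2 G := by
  unfold inv2
  have himg : {v | gdeg H v = 3 ∧ ∃ x y, x ≠ y ∧ H.Adj v x ∧ H.Adj v y ∧
        4 ≤ gdeg H x ∧ 4 ≤ gdeg H y}
      = φ '' {v | gdeg G v = 3 ∧ ∃ x y, x ≠ y ∧ G.Adj v x ∧ G.Adj v y ∧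
        4 ≤ gdeg G x ∧ 4 ≤ gdeg G y} := by
    ext w
    simp only [Set.mem_setOf_eq, Set.mem_image]
    constructor
    · rintro ⟨hw3, x, y, hxy, hax, hay, hdx, hdy⟩
      refine ⟨φ.symm w, ⟨?_, φ.symm x, φ.symm y, fun h => hxy (φ.symm.injective h), ?_, ?_,
        ?_, ?_⟩, φ.apply_symm_apply w⟩
      · rw [← gdeg_map φ (φ.symm w), φ.apply_symm_apply]; exact hw3
      · exact φ.symm.map_adj_iff.mpr hax
      · exact φ.symm.map_adj_iff.mpr hay
      · rw [← gdeg_map φ (φ.symm x), φ.apply_symm_apply]; exact hdx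
      · rw [← gdeg_map φ (φ.symm y), φ.apply_symm_apply]; exact hdy
    · rintro ⟨v, ⟨hv3, x, y, hxy, hax, hay, hdx, hdy⟩, rfl⟩
      refine ⟨by rw [gdeg_map]; exact hv3, φ x, φ y, fun h => hxy (φ.injective h),
        φ.map_adj_iff.mpr hax, φ.map_adj_iff.mpr hay, ?_, ?_⟩
      · rw [gdeg_map]; exact hdx
      · rw [gdeg_map]; exact hdy
  rw [himg, Set.ncard_image_of_injective _ φ.injective]

end IsoInv

section NonIso
variable {n K : ℕ} (hn : n = 3*K + 3) (hK : 7 ≤ K)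
include hn hK

lemma empty_deg_set {t u : ℕ} (ht : 1 ≤ t) (htu : 2*t + u ≤ K) (d : ℕ)
    (hd2 : d ≠ 2) (hd3 : d ≠ 3) (hdD : d ≠ K + 2 + (t + u)) :
    {v : Fin n | gdeg (myG n K t u) v = d} = ∅ := by
  ext v
  simp only [Set.mem_setOf_eq, Set.mem_empty_iff_false, iff_false]
  intro h
  by_cases hv : v.val < 3
  · rw [gdeg_core' hn hK ht htu v hv] at h
    exact hdD h.symm
  · rw [gdeg_tail' hn hK ht htu v (by omega)] at h
    split_ifs at h
    · exact hd3 h.symm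
    · exact hd2 h.symm

lemma noniso {t1 u1 t2 u2 : ℕ} (ht1 : 1 ≤ t1) (htu1 : 2*t1 + u1 ≤ K)
    (ht2 : 1 ≤ t2) (htu2 : 2*t2 + u2 ≤ K) (hne : t1 ≠ t2 ∨ u1 ≠ u2) :
    IsEmpty (myG n K t1 u1 ≃g myG n K t2 u2) := by
  constructor
  intro φ
  by_cases hsum : t1 + u1 = t2 + u2
  -- then t1 ≠ t2 and the inv2 invariant differs
  · have h1 := inv2_myG hn hK ht1 htu1
    have h2 := inv2_myG hn hK ht2 htu2
    have := inv2_iso φ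
    have ht12 : t1 = t2 := by omega
    omega
  · -- the maximum degrees differ
    have hcount := deg_count_iso φ (K + 2 + (t2 + u2))
    rw [ncard_core_set hn hK ht2 htu2] at hcount
    rw [empty_deg_set hn hK ht1 htu1 (K + 2 + (t2 + u2)) (by omega) (by omega) (by omega),
      Set.ncard_empty] at hcount
    omega

end NonIso
end TT
namespace TT

lemma arith_pair {K i : ℕ} (hK : 7 ≤ K) (hi : i < (K-4)^2/8) :
    2*(i/((K-2)/2) + 1) + i%((K-2)/2) ≤ K := by
  obtain ⟨K', rfl⟩ : ∃ K', K = K' + 4 := ⟨K - 4, by omega⟩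
  have hK' : 3 ≤ K' := by omega
  set U := (K' + 4 - 2)/2 with hUdef
  have hU1 : K' + 1 ≤ 2*U := by omega
  have hU2 : 2*U ≤ K' + 2 := by omega
  have hUpos : 0 < U := by omega
  have hsq : (K' + 4 - 4)^2 = K'^2 := by norm_num
  rw [hsq] at hi
  have hi8 : 8*i + 8 ≤ K'^2 := by
    have h1 : 8 * (K'^2 / 8) ≤ K'^2 := Nat.mul_div_le _ 8
    omega
  set q := i / U with hq
  set r := i % U with hr
  have hqr : U * q + r = i := Nat.div_add_mod i U
  have hrU : r < U := Nat.mod_lt _ hUpos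
  by_contra hcon
  push_neg at hcon
  have h1 : K' + 3 ≤ 2*q + r := by omega
  have h2 : 2*r ≤ K' := by omega
  have h3 : 8*(U*q) + 8*r + 8 ≤ K'^2 := by omega
  -- pass to integers
  have hz : False := by
    have c1 : (K' : ℤ) + 3 ≤ 2*q + r := by exact_mod_cast h1
    have c2 : 2*(r:ℤ) ≤ K' := by exact_mod_cast h2
    have c3 : 8*((U:ℤ)*q) + 8*r + 8 ≤ (K':ℤ)^2 := by exact_mod_cast h3
    have c4 : (K':ℤ) + 1 ≤ 2*U := by exact_mod_cast hU1
    have c5 : (0:ℤ) ≤ q := by positivity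
    have c6 : (0:ℤ) ≤ r := by positivity
    have c7 : (3:ℤ) ≤ K' := by exact_mod_cast hK'
    nlinarith [mul_nonneg (sub_nonneg.mpr c4) c5, mul_nonneg c6 c6,
      mul_nonneg c5 c6, mul_nonneg c5 c5]
  exact hz

lemma M_eq {n K : ℕ} (hn : n = 3*K + 3) (hK : 7 ≤ K) :
    (n - 15)^2 / 72 = (K - 4)^2 / 8 := by
  have h15 : n - 15 = 3*(K - 4) := by omega
  rw [h15, mul_pow]
  have : (3:ℕ)^2 = 9 := by norm_num
  rw [this]
  have h72 : (72:ℕ) = 9 * 8 := by norm_num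
  rw [h72]
  exact Nat.mul_div_mul_left _ _ (by norm_num)

lemma main_family (n : ℕ) (h24 : 24 ≤ n) (hdvd : 3 ∣ n) :
    ExistsPairwiseNonIsoTricentral n ((n - 15) ^ 2 / 72) := by
  set K := n/3 - 1 with hKdef
  have hn : n = 3*K + 3 := by omega
  have hK : 7 ≤ K := by omega
  have hM := M_eq hn hK
  refine ⟨fun i => myG n K (i.val / ((K-2)/2) + 1) (i.val % ((K-2)/2)), ?_, ?_⟩
  · intro i
    have hi : i.val < (K-4)^2/8 := by rw [← hM]; exact i.isLt
    have harith := arith_pair hK hi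
    exact ⟨_, isStrong hn hK (Nat.le_add_left 1 _) harith⟩
  · intro i j hij
    have hi : i.val < (K-4)^2/8 := by rw [← hM]; exact i.isLt
    have hj : j.val < (K-4)^2/8 := by rw [← hM]; exact j.isLt
    have hai := arith_pair hK hi
    have haj := arith_pair hK hj
    refine noniso hn hK ?_ hai ?_ haj ?_
    · exact Nat.le_add_left 1 _
    · exact Nat.le_add_left 1 _
    by_contra h
    push_neg at h
    obtain ⟨h1, h2⟩ := h
    apply hij
    apply Fin.val_injective
    have hdiv : i.val / ((K-2)/2) = j.val / ((K-2)/2) := by omega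
    have hmod : i.val % ((K-2)/2) = j.val % ((K-2)/2) := by omega
    have e1 := Nat.div_add_mod i.val ((K-2)/2)
    have e2 := Nat.div_add_mod j.val ((K-2)/2)
    rw [hdiv, hmod] at e1
    omega

end TT

theorem stmt19 :
    (∀ n : ℕ, 24 ≤ n → 3 ∣ n →
      ExistsPairwiseNonIsoTricentral n ((n - 15) ^ 2 / 72)) ∧
    ∃ c : ℝ, 0 < c ∧ ∃ N : ℕ, ∀ n : ℕ, N ≤ n → 3 ∣ n →
      ∃ m : ℕ, c * (n : ℝ) ^ 2 ≤ (m : ℝ) ∧ ExistsPairwiseNonIsoTricentral n m := by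
  refine ⟨TT.main_family, 1/200, by norm_num, 200, ?_⟩
  intro n hN hdvd
  refine ⟨(n - 15)^2 / 72, ?_, TT.main_family n (by omega) hdvd⟩
  have hfloor : ((n:ℕ) - 15)^2 ≤ 72 * ((n - 15)^2 / 72) + 71 := by
    have := Nat.mul_div_le ((n - 15)^2) 72
    omega
  have hcast : (((n - 15)^2 : ℕ) : ℝ) ≤ 72 * (((n - 15)^2 / 72 : ℕ) : ℝ) + 71 := by
    exact_mod_cast hfloor
  have hsub : ((n - 15 : ℕ) : ℝ) = (n : ℝ) - 15 := by
    have : (15:ℕ) ≤ n := by omega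
    push_cast [this]
    ring
  have hpow : (((n - 15)^2 : ℕ) : ℝ) = ((n:ℝ) - 15)^2 := by
    rw [Nat.cast_pow, hsub]
  rw [hpow] at hcast
  have hn200 : (200:ℝ) ≤ (n:ℝ) := by exact_mod_cast hN
  set m' : ℝ := (((n - 15)^2 / 72 : ℕ) : ℝ) with hm'
  nlinarith [sq_nonneg ((n:ℝ) - 15), sq_nonneg (n:ℝ), mul_self_nonneg ((n:ℝ) - 200)]
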